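/- Let G be a group with finite symmetric generating set X. Then (G,X) has the asynchronous falsification by fellow traveler property (for some constant) if and only if (G,X) has the synchronous falsification by fellow traveler property (for some constant). Moreover, if (G,X) has the asynchronous falsification by fellow traveler property with constant k ≥ 1, then it has the synchronous falsification by fellow traveler property with constant 4k. -/

import Mathlib

section WordMetricPrelude

variable {G : Type*} [Group G]

/-- `w` is a word over the generating set `X`. -/
def IsWord (X : Finset G) (w : List G) : Prop := ∀ x ∈ w, x ∈ X

/-- The path traced out by the word `w`, at time `t`: the product of the first
`min t w.length` letters of `w`. -/
def wordPath (w : List G) (t : ℕ) : G := (w.take t).prod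

/-- The word metric on `G` with respect to `X`: the minimal length of a word
over `X` representing `g⁻¹ * h`. -/
noncomputable def wordDist (X : Finset G) (g h : G) : ℕ :=
  sInf {n : ℕ | ∃ w : List G, IsWord X w ∧ w.length = n ∧ w.prod = g⁻¹ * h}

/-- A word `w` over `X` is geodesic if its length equals the distance from `1`
to the element it represents. -/
def IsGeodesic (X : Finset G) (w : List G) : Prop :=
  IsWord X w ∧ w.length = wordDist X 1 w.prod

/-- Words `w` and `u` synchronously `k`-fellow travel. -/
def SyncFellowTravel (X : Finset G) (k : ℕ) (w u : List G) : Prop :=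
  ∀ t : ℕ, wordDist X (wordPath w t) (wordPath u t) ≤ k

/-- Words `w` and `u` asynchronously `k`-fellow travel: there is a nondecreasing
unbounded reparameterization `φ` with `d(w(t), u(φ t)) ≤ k` for all `t`. -/
def AsyncFellowTravel (X : Finset G) (k : ℕ) (w u : List G) : Prop :=
  ∃ φ : ℕ → ℕ, Monotone φ ∧ (∀ N : ℕ, ∃ t : ℕ, N ≤ φ t) ∧
    ∀ t : ℕ, wordDist X (wordPath w t) (wordPath u (φ t)) ≤ k

/-- `(G, X)` has the synchronous falsification by fellow traveler property with
constant `k`. -/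
def SyncFFTP (X : Finset G) (k : ℕ) : Prop :=
  ∀ w : List G, IsWord X w → ¬ IsGeodesic X w →
    ∃ u : List G, IsWord X u ∧ u.prod = w.prod ∧ u.length < w.length ∧
      SyncFellowTravel X k u w

/-- `(G, X)` has the asynchronous falsification by fellow traveler property with
constant `k`. -/
def AsyncFFTP (X : Finset G) (k : ℕ) : Prop :=
  ∀ w : List G, IsWord X w → ¬ IsGeodesic X w →
    ∃ u : List G, IsWord X u ∧ u.prod = w.prod ∧ u.length < w.length ∧
      AsyncFellowTravel X k u w

end WordMetricPrelude

/-! Cut a non-geodesic word `w` as `p ++ r` at its shortest non-geodesic prefix `p`: then `p` is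
within `2` of a geodesic, and an asynchronous falsifier `q` of `p` is within `1` of one. Along
such words the distance from `1` grows like time up to that defect, so the reparametrisation of an
asynchronous `k`-fellow travel stays within `k + 2` of the identity, which makes `q` and `p`
synchronous `(2k + 2)`-fellow travelers. The word `q ++ r` then falsifies `w` synchronously. -/

section Words

variable {α : Type*} {X : Finset α} {w v : List α}

theorem isWord_append : IsWord X (w ++ v) ↔ IsWord X w ∧ IsWord X v := by
  simp only [IsWord, List.mem_append, or_imp, forall_and]

theorem IsWord.take (hw : IsWord X w) (n : ℕ) : IsWord X (w.take n) :=
  fun x hx => hw x (List.mem_of_mem_take hx)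

theorem IsWord.drop (hw : IsWord X w) (n : ℕ) : IsWord X (w.drop n) :=
  fun x hx => hw x (List.mem_of_mem_drop hx)

end Words

section WordMetric

variable {G : Type*} [Group G] {X : Finset G}

theorem IsWord.map_inv_reverse (hXsym : ∀ x ∈ X, x⁻¹ ∈ X) {w : List G} (hw : IsWord X w) :
    IsWord X (w.map (·⁻¹)).reverse := by
  intro x hx
  obtain ⟨y, hy, rfl⟩ := List.mem_map.mp (List.mem_reverse.mp hx)
  exact hXsym y (hw y hy)

theorem exists_isWord_prod_eq (hXsym : ∀ x ∈ X, x⁻¹ ∈ X)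
    (hXgen : Subgroup.closure (X : Set G) = ⊤) (g : G) :
    ∃ w : List G, IsWord X w ∧ w.prod = g := by
  have hg : g ∈ (Subgroup.closure (X : Set G)).toSubmonoid := by rw [hXgen]; trivial
  have hXinv : (X : Set G)⁻¹ ⊆ X := fun x hx => by simpa using hXsym _ hx
  rw [Subgroup.closure_toSubmonoid, Set.union_eq_self_of_subset_right hXinv] at hg
  exact Submonoid.exists_list_of_mem_closure hg

theorem wordDist_le_length {g h : G} {w : List G} (hw : IsWord X w) (hp : w.prod = g⁻¹ * h) :
    wordDist X g h ≤ w.length :=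
  Nat.sInf_le ⟨w, hw, rfl, hp⟩

theorem exists_isWord_length_eq_wordDist (hXsym : ∀ x ∈ X, x⁻¹ ∈ X)
    (hXgen : Subgroup.closure (X : Set G) = ⊤) (g h : G) :
    ∃ w : List G, IsWord X w ∧ w.length = wordDist X g h ∧ w.prod = g⁻¹ * h := by
  obtain ⟨w, hw, hwp⟩ := exists_isWord_prod_eq hXsym hXgen (g⁻¹ * h)
  exact Nat.sInf_mem (s := {n | ∃ w : List G, IsWord X w ∧ w.length = n ∧ w.prod = g⁻¹ * h})
    ⟨w.length, w, hw, rfl, hwp⟩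

theorem wordDist_self (g : G) : wordDist X g g = 0 :=
  Nat.le_zero.mp <| wordDist_le_length (w := []) (fun _ hx => absurd hx List.not_mem_nil) (by simp)

theorem wordDist_comm (hXsym : ∀ x ∈ X, x⁻¹ ∈ X) (g h : G) :
    wordDist X g h = wordDist X h g := by
  have key : ∀ a b : G, {n | ∃ w : List G, IsWord X w ∧ w.length = n ∧ w.prod = a⁻¹ * b} ⊆
      {n | ∃ w : List G, IsWord X w ∧ w.length = n ∧ w.prod = b⁻¹ * a} := by
    rintro a b _ ⟨w, hw, rfl, hwp⟩
    refine ⟨_, hw.map_inv_reverse hXsym, by simp, ?_⟩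
    rw [← List.prod_inv_reverse, hwp, mul_inv_rev, inv_inv]
  unfold wordDist
  rw [(key g h).antisymm (key h g)]

theorem wordDist_triangle (hXsym : ∀ x ∈ X, x⁻¹ ∈ X)
    (hXgen : Subgroup.closure (X : Set G) = ⊤) (g m h : G) :
    wordDist X g h ≤ wordDist X g m + wordDist X m h := by
  obtain ⟨w₁, hw₁, hl₁, hp₁⟩ := exists_isWord_length_eq_wordDist hXsym hXgen g m
  obtain ⟨w₂, hw₂, hl₂, hp₂⟩ := exists_isWord_length_eq_wordDist hXsym hXgen m h
  rw [← hl₁, ← hl₂, ← List.length_append]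
  refine wordDist_le_length (isWord_append.mpr ⟨hw₁, hw₂⟩) ?_
  rw [List.prod_append, hp₁, hp₂, mul_assoc, mul_inv_cancel_left]

@[simp]
theorem wordPath_zero (w : List G) : wordPath w 0 = 1 := by
  simp [wordPath]

theorem wordPath_of_length_le {w : List G} {t : ℕ} (h : w.length ≤ t) : wordPath w t = w.prod := by
  rw [wordPath, List.take_of_length_le h]

theorem wordPath_min_length (w : List G) (t : ℕ) : wordPath w (min t w.length) = wordPath w t := by
  rw [wordPath, wordPath, ← List.take_eq_take_min]

theorem wordPath_append (w v : List G) (t : ℕ) :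
    wordPath (w ++ v) t = wordPath w t * wordPath v (t - w.length) := by
  rw [wordPath, List.take_append, List.prod_append, wordPath, wordPath]

theorem wordDist_wordPath_le_sub {w : List G} (hw : IsWord X w) {s t : ℕ} (hst : s ≤ t) :
    wordDist X (wordPath w s) (wordPath w t) ≤ t - s := by
  have hprefix : w.take s = (w.take t).take s := by rw [List.take_take, min_eq_left hst]
  refine (wordDist_le_length ((hw.take t).drop s) ?_).trans (by simp only [List.length_drop, List.length_take]; omega)
  rw [eq_inv_mul_iff_mul_eq, wordPath, wordPath, hprefix, ← List.prod_append,
    List.take_append_drop]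

theorem wordDist_wordPath_le (hXsym : ∀ x ∈ X, x⁻¹ ∈ X) {w : List G} (hw : IsWord X w) (s t : ℕ) :
    wordDist X (wordPath w s) (wordPath w t) ≤ max s t - min s t := by
  rcases le_total s t with hst | hts
  · simpa [hst] using wordDist_wordPath_le_sub hw hst
  · simpa [wordDist_comm hXsym (wordPath w s), hts] using wordDist_wordPath_le_sub hw hts

theorem wordDist_one_wordPath_le {w : List G} (hw : IsWord X w) (t : ℕ) :
    wordDist X 1 (wordPath w t) ≤ t := by
  simpa using wordDist_wordPath_le_sub hw (Nat.zero_le t)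

theorem le_wordDist_one_wordPath_add (hXsym : ∀ x ∈ X, x⁻¹ ∈ X)
    (hXgen : Subgroup.closure (X : Set G) = ⊤) {w : List G} (hw : IsWord X w) {c : ℕ}
    (hc : w.length ≤ wordDist X 1 w.prod + c) {t : ℕ} (ht : t ≤ w.length) :
    t ≤ wordDist X 1 (wordPath w t) + c := by
  have htri := wordDist_triangle hXsym hXgen 1 (wordPath w t) w.prod
  have hrest := wordDist_wordPath_le_sub hw ht
  rw [wordPath_of_length_le le_rfl] at hrest
  omega

theorem exists_append_not_isGeodesic (hXsym : ∀ x ∈ X, x⁻¹ ∈ X)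
    (hXgen : Subgroup.closure (X : Set G) = ⊤) {w : List G} (hw : IsWord X w)
    (hng : ¬ IsGeodesic X w) :
    ∃ p r : List G, w = p ++ r ∧ ¬ IsGeodesic X p ∧ p.length ≤ wordDist X 1 p.prod + 2 := by
  induction w using List.reverseRecOn with
  | nil => exact absurd ⟨hw, by simp [wordDist_self]⟩ hng
  | append_singleton v x ih =>
    have hv := (isWord_append.mp hw).1
    by_cases hvg : IsGeodesic X v
    · refine ⟨v ++ [x], [], by simp, hng, ?_⟩
      have htri := wordDist_triangle hXsym hXgen 1 (v ++ [x]).prod v.prod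
      have hstep : wordDist X (v ++ [x]).prod v.prod ≤ 1 :=
        wordDist_le_length (w := [x⁻¹]) (by simpa [IsWord] using hXsym x (hw x (by simp)))
          (by simp [mul_assoc])
      have hv_len := hvg.2
      simp only [List.length_append, List.length_singleton]
      omega
    · obtain ⟨p, r, rfl, hpng, hp⟩ := ih hv hvg
      exact ⟨p, r ++ [x], by simp, hpng, hp⟩

theorem SyncFellowTravel.mono {k k' : ℕ} {u w : List G} (h : SyncFellowTravel X k u w)
    (hk : k ≤ k') : SyncFellowTravel X k' u w :=
  fun t => (h t).trans hk

theorem SyncFellowTravel.asyncFellowTravel {k : ℕ} {u w : List G}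
    (h : SyncFellowTravel X k u w) : AsyncFellowTravel X k u w :=
  ⟨id, monotone_id, fun N => ⟨N, le_rfl⟩, h⟩

theorem AsyncFellowTravel.syncFellowTravel (hXsym : ∀ x ∈ X, x⁻¹ ∈ X)
    (hXgen : Subgroup.closure (X : Set G) = ⊤) {k a b : ℕ} {q p : List G}
    (hq : IsWord X q) (hp : IsWord X p) (hqb : q.length ≤ wordDist X 1 q.prod + b)
    (hpa : p.length ≤ wordDist X 1 p.prod + a) (hprod : q.prod = p.prod)
    (h : AsyncFellowTravel X k q p) :
    SyncFellowTravel X (2 * k + max a b) q p := by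
  obtain ⟨φ, -, -, hφ⟩ := h
  intro t
  rcases le_or_gt t q.length with ht | ht
  · set s := min (φ t) p.length
    have hqp : wordDist X (wordPath q t) (wordPath p s) ≤ k := by
      rw [wordPath_min_length]; exact hφ t
    have hq_le := wordDist_one_wordPath_le hq t
    have hq_ge := le_wordDist_one_wordPath_add hXsym hXgen hq hqb ht
    have hp_le := wordDist_one_wordPath_le hp s
    have hp_ge := le_wordDist_one_wordPath_add hXsym hXgen hp hpa (t := s) (min_le_right _ _)
    have htri₁ := wordDist_triangle hXsym hXgen 1 (wordPath q t) (wordPath p s)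
    have htri₂ := wordDist_triangle hXsym hXgen 1 (wordPath p s) (wordPath q t)
    rw [wordDist_comm hXsym (wordPath p s)] at htri₂
    have htri₃ := wordDist_triangle hXsym hXgen (wordPath q t) (wordPath p s) (wordPath p t)
    have hps := wordDist_wordPath_le hXsym hp s t
    omega
  · rw [wordPath_of_length_le ht.le, hprod, ← wordPath_of_length_le (w := p) le_rfl,
      ← wordPath_min_length p t]
    have hpt := wordDist_wordPath_le hXsym hp p.length (min t p.length)
    have hq_ge : wordDist X 1 p.prod ≤ q.length := wordDist_le_length hq (by simp [hprod])
    omega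

theorem SyncFellowTravel.append (hXsym : ∀ x ∈ X, x⁻¹ ∈ X) {K : ℕ} {q p r : List G}
    (h : SyncFellowTravel X K q p) (hprod : q.prod = p.prod) (hlen : q.length ≤ p.length)
    (hpr : IsWord X (p ++ r)) :
    SyncFellowTravel X (max K (p.length - q.length)) (q ++ r) (p ++ r) := by
  intro t
  rcases le_total t q.length with ht | ht
  · have hq : wordPath (q ++ r) t = wordPath q t := by
      rw [wordPath_append, Nat.sub_eq_zero_of_le ht, wordPath_zero, mul_one]
    have hp : wordPath (p ++ r) t = wordPath p t := by
      rw [wordPath_append, Nat.sub_eq_zero_of_le (ht.trans hlen), wordPath_zero, mul_one]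
    rw [hq, hp]
    exact (h t).trans (le_max_left _ _)
  · have hshift : wordPath (q ++ r) t = wordPath (p ++ r) (t + (p.length - q.length)) := by
      rw [wordPath_append, wordPath_append, wordPath_of_length_le ht,
        wordPath_of_length_le (w := p) (by omega), hprod,
        show t + (p.length - q.length) - p.length = t - q.length by omega]
    have hpath := wordDist_wordPath_le hXsym hpr (t + (p.length - q.length)) t
    rw [hshift]
    omega

theorem SyncFFTP.mono {k k' : ℕ} (h : SyncFFTP X k) (hk : k ≤ k') : SyncFFTP X k' :=
  fun w hw hng => (h w hw hng).imp fun _ ⟨hu, hprod, hlen, hsync⟩ =>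
    ⟨hu, hprod, hlen, hsync.mono hk⟩

theorem SyncFFTP.asyncFFTP {k : ℕ} (h : SyncFFTP X k) : AsyncFFTP X k :=
  fun w hw hng => (h w hw hng).imp fun _ ⟨hu, hprod, hlen, hsync⟩ =>
    ⟨hu, hprod, hlen, hsync.asyncFellowTravel⟩

theorem AsyncFFTP.syncFFTP (hXsym : ∀ x ∈ X, x⁻¹ ∈ X)
    (hXgen : Subgroup.closure (X : Set G) = ⊤) {k : ℕ} (h : AsyncFFTP X k) :
    SyncFFTP X (2 * k + 2) := by
  intro w hw hng
  obtain ⟨p, r, rfl, hpng, hp⟩ := exists_append_not_isGeodesic hXsym hXgen hw hng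
  obtain ⟨hpw, hrw⟩ := isWord_append.mp hw
  obtain ⟨q, hq, hprod, hlen, hasync⟩ := h p hpw hpng
  have hpq : wordDist X 1 p.prod ≤ q.length := wordDist_le_length hq (by simp [hprod])
  have hqp : SyncFellowTravel X (2 * k + max 2 1) q p :=
    hasync.syncFellowTravel hXsym hXgen hq hpw (by rw [hprod]; omega) hp hprod
  refine ⟨q ++ r, isWord_append.mpr ⟨hq, hrw⟩, by simp [hprod], by simp only [List.length_append]; omega, ?_⟩
  exact (hqp.append hXsym hprod hlen.le hw).mono (by omega)

end WordMetric

/-- The asynchronous and synchronous falsification by fellow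
traveler properties are equivalent; moreover the asynchronous property with
constant `k ≥ 1` implies the synchronous property with constant `4k`. -/
theorem async_fftp_iff_sync_fftp {G : Type*} [Group G]
    (X : Finset G) (hXsym : ∀ x ∈ X, x⁻¹ ∈ X)
    (hXgen : Subgroup.closure (X : Set G) = ⊤) :
    ((∃ k : ℕ, AsyncFFTP X k) ↔ (∃ k : ℕ, SyncFFTP X k)) ∧
      (∀ k : ℕ, 1 ≤ k → AsyncFFTP X k → SyncFFTP X (4 * k)) :=
  ⟨⟨fun ⟨_, h⟩ => ⟨_, h.syncFFTP hXsym hXgen⟩, fun ⟨k, h⟩ => ⟨k, h.asyncFFTP⟩⟩,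
    fun _ hk h => (h.syncFFTP hXsym hXgen).mono (by omega)⟩
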